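/- Let G be a finite simple graph on n vertices with minimum degree δ ≥ 1. Then avd(G) ≤ (n/2)·(1 + δ/(2^δ − 1)). -/

import Mathlib

open Finset

/-- `S` is a dominating set of `G`: every vertex is in `S` or adjacent to a vertex of `S`. -/
def SimpleGraph.IsDomSet {V : Type*} (G : SimpleGraph V) (S : Finset V) : Prop :=
  ∀ v : V, v ∈ S ∨ ∃ u ∈ S, G.Adj u v

/-- The family of all dominating sets of `G`. -/
noncomputable def SimpleGraph.domSets {V : Type*} [Fintype V] (G : SimpleGraph V) :
    Finset (Finset V) :=
  @Finset.filter _ (fun S => G.IsDomSet S) (Classical.decPred _) Finset.univ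

/-- The average order (cardinality) of a dominating set of `G`. -/
noncomputable def SimpleGraph.avd {V : Type*} [Fintype V] (G : SimpleGraph V) : ℝ :=
  (∑ S ∈ G.domSets, (S.card : ℝ)) / (G.domSets).card

/-!
Dominating sets form an up-set `𝒟`. Pairing each `S ∋ v` with `S.erase v` gives
`2 ∑ |S| = n |𝒟| + #{(v, S) | v ∈ S, S.erase v ∉ 𝒟}`, and each such `v` has a private
neighbour `u`, i.e. `S ∩ N[u] = {v}`. Fix `u`, put `m = |N[u]| ≥ δ + 1`, and split `𝒟` by
`R = S \ N[u]`. If exactly `j` of the sets `insert x R` (`x ∈ N[u]`) dominate, then so does every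
`R ∪ X` with `X ⊆ N[u]` containing one of these `x`, so the fibre holds at least `2^m - 2^(m-j)`
dominating sets, against `j` with `|S ∩ N[u]| = 1`. Since `k 2^k / (2^k - 1)` increases and
`k / (2^k - 1)` decreases in `k`, this yields `(2^δ - 1) #{S ∈ 𝒟 | |S ∩ N[u]| = 1} ≤ δ |𝒟|`;
summing over `u` gives the bound.
-/

theorem two_pow_sub_one_mul_le_mul_two_pow_sub_one {a b : ℕ} (ha : 1 ≤ a) (hab : a ≤ b) :
    (2 ^ a - 1) * b ≤ a * (2 ^ b - 1) := by
  induction b, hab using Nat.le_induction with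
  | base => rw [mul_comm]
  | succ b hab ih =>
    have h2a : 2 ^ a ≤ 2 ^ b := Nat.pow_le_pow_right two_pos hab
    have h2b : 2 ^ b ≤ a * 2 ^ b := Nat.le_mul_of_pos_left _ ha
    have h1 : 1 ≤ 2 ^ a := Nat.one_le_two_pow
    have h1' : 1 ≤ 2 ^ b := Nat.one_le_two_pow
    rw [pow_succ]
    zify [h1, h1', show 1 ≤ 2 ^ b * 2 by omega] at ih h2a h2b ⊢
    nlinarith

theorem mul_two_pow_mul_two_pow_sub_one_le {a b : ℕ} (hab : a ≤ b) :
    a * 2 ^ a * (2 ^ b - 1) ≤ b * 2 ^ b * (2 ^ a - 1) := by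
  induction b, hab using Nat.le_induction with
  | base => rw [mul_comm]
  | succ b hab ih =>
    rcases Nat.eq_zero_or_pos a with rfl | ha
    · simp
    have h2a : 2 ^ a ≤ 2 * (2 ^ a - 1) := by
      have : 2 ≤ 2 ^ a := Nat.le_self_pow (by omega) 2
      omega
    have hb : a ≤ 2 ^ b := hab.trans (Nat.lt_two_pow_self).le
    have h1 : 1 ≤ 2 ^ a := Nat.one_le_two_pow
    have h1' : 1 ≤ 2 ^ b := Nat.one_le_two_pow
    rw [pow_succ]
    zify [h1, h1', show 1 ≤ 2 ^ b * 2 by omega] at ih h2a hb ⊢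
    nlinarith

theorem two_pow_sub_one_mul_le_mul_two_pow_sub_two_pow {j m : ℕ} (hjm : j ≤ m) :
    (2 ^ m - 1) * j ≤ m * (2 ^ m - 2 ^ (m - j)) := by
  have hmono := mul_two_pow_mul_two_pow_sub_one_le hjm
  have hsplit : 2 ^ (m - j) * 2 ^ j = 2 ^ m := by rw [← pow_add, Nat.sub_add_cancel hjm]
  refine Nat.le_of_mul_le_mul_right ?_ (Nat.two_pow_pos j)
  calc (2 ^ m - 1) * j * 2 ^ j = j * 2 ^ j * (2 ^ m - 1) := by ring
    _ ≤ m * 2 ^ m * (2 ^ j - 1) := hmono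
    _ = m * (2 ^ m - 2 ^ (m - j)) * 2 ^ j := by
      rw [mul_assoc m, mul_assoc m, Nat.sub_mul, Nat.mul_sub, hsplit, mul_one, mul_comm]

section UpperSet

variable {α : Type*} [DecidableEq α] {𝒜 : Finset (Finset α)}

theorem card_powerset_filter_not_disjoint {J K : Finset α} (hJK : J ⊆ K) :
    #{X ∈ K.powerset | ¬Disjoint X J} = 2 ^ #K - 2 ^ (#K - #J) := by
  have hsplit := card_filter_add_card_filter_not (s := K.powerset) (Disjoint · J)
  have hdisj : {X ∈ K.powerset | Disjoint X J} = (K \ J).powerset := by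
    ext X; simp [subset_sdiff]
  rw [hdisj, card_powerset, card_powerset, card_sdiff_of_subset hJK] at hsplit
  omega

theorem card_inter_eq_one_and_sdiff_eq_iff {R K S : Finset α} (hRK : Disjoint R K) :
    #(S ∩ K) = 1 ∧ S \ K = R ↔ ∃ x ∈ K, insert x R = S := by
  constructor
  · rintro ⟨hcard, hR⟩
    obtain ⟨x, hx⟩ := card_eq_one.mp hcard
    refine ⟨x, (mem_inter.mp (hx ▸ mem_singleton_self x)).2, ?_⟩
    rw [← sdiff_union_inter S K, hR, hx, union_comm, insert_eq]
  · rintro ⟨x, hx, rfl⟩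
    refine ⟨?_, ?_⟩
    · rw [insert_inter_of_mem hx, disjoint_iff_inter_eq_empty.mp hRK]; rfl
    · rw [insert_sdiff_of_mem _ hx, sdiff_eq_self_of_disjoint hRK]

theorem card_filter_card_inter_eq_one_sdiff_eq_le (h𝒜 : IsUpperSet (𝒜 : Set (Finset α)))
    {K R : Finset α} (hRK : Disjoint R K) :
    (2 ^ #K - 1) * #{S ∈ 𝒜 | #(S ∩ K) = 1 ∧ S \ K = R} ≤ #K * #{S ∈ 𝒜 | S \ K = R} := by
  set J := {x ∈ K | insert x R ∈ 𝒜}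
  have hJK : J ⊆ K := filter_subset _ _
  have hsingle : {S ∈ 𝒜 | #(S ∩ K) = 1 ∧ S \ K = R} = J.image (insert · R) := by
    ext S
    simp only [mem_filter, card_inter_eq_one_and_sdiff_eq_iff hRK, mem_image, J]
    constructor
    · rintro ⟨hS, x, hx, rfl⟩; exact ⟨x, ⟨hx, hS⟩, rfl⟩
    · rintro ⟨x, ⟨hx, hS⟩, rfl⟩; exact ⟨hS, x, hx, rfl⟩
  have hsingle_card : #{S ∈ 𝒜 | #(S ∩ K) = 1 ∧ S \ K = R} = #J := by
    rw [hsingle, card_image_of_injOn]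
    intro x hx y _ hxy
    exact (insert_inj fun h => disjoint_left.mp hRK h (hJK hx)).mp hxy
  have hfiber : #{X ∈ K.powerset | ¬Disjoint X J} ≤ #{S ∈ 𝒜 | S \ K = R} := by
    refine card_le_card_of_injOn (R ∪ ·) ?_ ?_
    · intro X hX
      simp only [mem_coe, mem_filter, mem_powerset, not_disjoint_iff] at hX
      obtain ⟨hXK, x, hxX, hxJ⟩ := hX
      refine mem_filter.mpr ⟨h𝒜 ?_ (mem_filter.mp hxJ).2, ?_⟩
      · exact insert_subset (mem_union_right _ hxX) subset_union_left
      · rw [union_sdiff_distrib, sdiff_eq_self_of_disjoint hRK, sdiff_eq_empty_iff_subset.mpr hXK,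
          union_empty]
    · intro X hX Y hY hXY
      simp only [mem_coe, mem_filter, mem_powerset] at hX hY
      have key : ∀ Z ⊆ K, (R ∪ Z) ∩ K = Z := fun Z hZ => by
        rw [union_inter_distrib_right, disjoint_iff_inter_eq_empty.mp hRK, empty_union,
          inter_eq_left.mpr hZ]
      rw [← key X hX.1, ← key Y hY.1]
      exact congrArg (· ∩ K) hXY
  rw [hsingle_card]
  calc (2 ^ #K - 1) * #J ≤ #K * (2 ^ #K - 2 ^ (#K - #J)) :=
        two_pow_sub_one_mul_le_mul_two_pow_sub_two_pow (card_le_card hJK)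
    _ ≤ #K * #{S ∈ 𝒜 | S \ K = R} := by
      rw [← card_powerset_filter_not_disjoint hJK]; exact Nat.mul_le_mul_left _ hfiber

theorem card_filter_card_inter_eq_one_le (h𝒜 : IsUpperSet (𝒜 : Set (Finset α))) (K : Finset α) :
    (2 ^ #K - 1) * #{S ∈ 𝒜 | #(S ∩ K) = 1} ≤ #K * #𝒜 := by
  have hmaps : ∀ S ∈ 𝒜, S \ K ∈ 𝒜.image (· \ K) := fun S hS => mem_image_of_mem _ hS
  rw [card_eq_sum_card_fiberwise (fun S hS => hmaps S (mem_filter.mp hS).1),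
    card_eq_sum_card_fiberwise hmaps, mul_sum, mul_sum]
  refine sum_le_sum fun R hR => ?_
  obtain ⟨S, -, rfl⟩ := mem_image.mp hR
  rw [filter_filter]
  exact card_filter_card_inter_eq_one_sdiff_eq_le h𝒜 sdiff_disjoint

theorem card_filter_card_inter_eq_one_le_of_le (h𝒜 : IsUpperSet (𝒜 : Set (Finset α)))
    {K : Finset α} {d : ℕ} (hd : 1 ≤ d) (hdK : d ≤ #K) :
    (2 ^ d - 1) * #{S ∈ 𝒜 | #(S ∩ K) = 1} ≤ d * #𝒜 := by
  refine Nat.le_of_mul_le_mul_left ?_ (hd.trans hdK)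
  calc #K * ((2 ^ d - 1) * #{S ∈ 𝒜 | #(S ∩ K) = 1})
      = (2 ^ d - 1) * #K * #{S ∈ 𝒜 | #(S ∩ K) = 1} := by ring
    _ ≤ d * (2 ^ #K - 1) * #{S ∈ 𝒜 | #(S ∩ K) = 1} :=
      Nat.mul_le_mul_right _ (two_pow_sub_one_mul_le_mul_two_pow_sub_one hd hdK)
    _ ≤ d * (#K * #𝒜) := by
      rw [mul_assoc]; exact Nat.mul_le_mul_left _ (card_filter_card_inter_eq_one_le h𝒜 K)
    _ = #K * (d * #𝒜) := by ring

theorem card_filter_mem_eq_card_filter_notMem_add (h𝒜 : IsUpperSet (𝒜 : Set (Finset α))) (v : α) :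
    #{S ∈ 𝒜 | v ∈ S} = #{S ∈ 𝒜 | v ∉ S} + #{S ∈ 𝒜 | v ∈ S ∧ S.erase v ∉ 𝒜} := by
  have hsplit := card_filter_add_card_filter_not (s := {S ∈ 𝒜 | v ∈ S}) (·.erase v ∈ 𝒜)
  simp only [filter_filter] at hsplit
  rw [← hsplit, add_left_inj]
  refine card_nbij' (·.erase v) (insert v) ?_ ?_ ?_ ?_
  · intro S hS
    simp only [mem_coe, mem_filter] at hS ⊢
    exact ⟨hS.2.2, notMem_erase v S⟩
  · intro S hS
    simp only [mem_coe, mem_filter] at hS ⊢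
    refine ⟨h𝒜 (subset_insert v S) hS.1, mem_insert_self v S, ?_⟩
    rw [erase_insert hS.2]
    exact hS.1
  · intro S hS
    exact insert_erase (mem_filter.mp hS).2.1
  · intro S hS
    exact erase_insert (mem_filter.mp hS).2

theorem two_mul_sum_card_eq [Fintype α] (h𝒜 : IsUpperSet (𝒜 : Set (Finset α))) :
    2 * ∑ S ∈ 𝒜, #S = Fintype.card α * #𝒜 + ∑ v, #{S ∈ 𝒜 | v ∈ S ∧ S.erase v ∉ 𝒜} := by
  have hcount : ∑ S ∈ 𝒜, #S = ∑ v, #{S ∈ 𝒜 | v ∈ S} := by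
    simpa [bipartiteAbove, bipartiteBelow] using
      sum_card_bipartiteAbove_eq_sum_card_bipartiteBelow (s := 𝒜) (t := univ) (fun S v => v ∈ S)
  have hcompl : ∀ v, #{S ∈ 𝒜 | v ∈ S} + #{S ∈ 𝒜 | v ∉ S} = #𝒜 := fun v =>
    card_filter_add_card_filter_not _
  calc 2 * ∑ S ∈ 𝒜, #S = ∑ v, (#{S ∈ 𝒜 | v ∈ S} + #{S ∈ 𝒜 | v ∈ S}) := by
        rw [hcount, two_mul, sum_add_distrib]
    _ = ∑ v, (#𝒜 + #{S ∈ 𝒜 | v ∈ S ∧ S.erase v ∉ 𝒜}) := by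
        refine sum_congr rfl fun v _ => ?_
        rw [← hcompl v, card_filter_mem_eq_card_filter_notMem_add h𝒜 v]; ring
    _ = Fintype.card α * #𝒜 + ∑ v, #{S ∈ 𝒜 | v ∈ S ∧ S.erase v ∉ 𝒜} := by
        rw [sum_add_distrib, sum_const, card_univ, smul_eq_mul]

end UpperSet

namespace SimpleGraph

variable {V : Type*}

theorem IsDomSet.mono {G : SimpleGraph V} {S T : Finset V} (hS : G.IsDomSet S) (hST : S ⊆ T) :
    G.IsDomSet T :=
  fun v => (hS v).imp (@hST v) fun ⟨u, hu, huv⟩ => ⟨u, hST hu, huv⟩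

variable (G : SimpleGraph V) [Fintype V]

theorem mem_domSets {S : Finset V} : S ∈ G.domSets ↔ G.IsDomSet S := by
  simp [domSets]

theorem isUpperSet_domSets : IsUpperSet (G.domSets : Set (Finset V)) :=
  fun _ _ hST hS => G.mem_domSets.mpr ((G.mem_domSets.mp hS).mono hST)

theorem domSets_nonempty : G.domSets.Nonempty :=
  ⟨univ, G.mem_domSets.mpr fun v => Or.inl (mem_univ v)⟩

variable [DecidableEq V] [DecidableRel G.Adj]

def closedNeighborFinset (u : V) : Finset V := insert u (G.neighborFinset u)

theorem card_closedNeighborFinset (u : V) : #(G.closedNeighborFinset u) = G.degree u + 1 := by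
  rw [closedNeighborFinset, card_insert_of_notMem (by simp), card_neighborFinset_eq_degree]

theorem isDomSet_iff_forall_inter_closedNeighborFinset_nonempty {S : Finset V} :
    G.IsDomSet S ↔ ∀ u, (S ∩ G.closedNeighborFinset u).Nonempty := by
  refine forall_congr' fun u => ?_
  simp only [closedNeighborFinset, Finset.Nonempty, mem_inter, mem_insert, mem_neighborFinset]
  constructor
  · rintro (hu | ⟨w, hw, hwu⟩)
    · exact ⟨u, hu, Or.inl rfl⟩
    · exact ⟨w, hw, Or.inr hwu.symm⟩
  · rintro ⟨w, hw, rfl | huw⟩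
    · exact Or.inl hw
    · exact Or.inr ⟨w, hw, huw.symm⟩

variable {G} in
theorem IsDomSet.exists_inter_closedNeighborFinset_eq_singleton {S : Finset V} {v : V}
    (hS : G.IsDomSet S) (hv : ¬G.IsDomSet (S.erase v)) :
    ∃ u, S ∩ G.closedNeighborFinset u = {v} := by
  simp only [isDomSet_iff_forall_inter_closedNeighborFinset_nonempty, not_forall,
    not_nonempty_iff_eq_empty, erase_inter] at hS hv
  obtain ⟨u, hu⟩ := hv
  exact ⟨u, (erase_eq_empty_iff _ _).mp hu |>.resolve_left (hS u).ne_empty⟩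

theorem card_filter_notMem_domSets_erase_le {S : Finset V} (hS : G.IsDomSet S) :
    #{v | v ∈ S ∧ S.erase v ∉ G.domSets} ≤ #{u | #(S ∩ G.closedNeighborFinset u) = 1} := by
  refine card_le_card_of_forall_subsingleton (fun v u => S ∩ G.closedNeighborFinset u = {v})
    (fun v hv => ?_) (fun u _ v hv w hw => singleton_injective (hv.2.symm.trans hw.2))
  obtain ⟨u, hu⟩ :=
    hS.exists_inter_closedNeighborFinset_eq_singleton (G.mem_domSets.not.mp (mem_filter.mp hv).2.2)
  exact ⟨u, mem_filter.mpr ⟨mem_univ u, by rw [hu, card_singleton]⟩, hu⟩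

theorem sum_card_filter_notMem_domSets_erase_le :
    ∑ v, #{S ∈ G.domSets | v ∈ S ∧ S.erase v ∉ G.domSets}
      ≤ ∑ u, #{S ∈ G.domSets | #(S ∩ G.closedNeighborFinset u) = 1} := by
  have hswap := sum_card_bipartiteAbove_eq_sum_card_bipartiteBelow (s := G.domSets) (t := univ)
    (fun S v => v ∈ S ∧ S.erase v ∉ G.domSets)
  have hswap' := sum_card_bipartiteAbove_eq_sum_card_bipartiteBelow (s := G.domSets) (t := univ)
    (fun S u => #(S ∩ G.closedNeighborFinset u) = 1)
  simp only [bipartiteAbove, bipartiteBelow] at hswap hswap'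
  rw [← hswap, ← hswap']
  exact sum_le_sum fun S hS => G.card_filter_notMem_domSets_erase_le (G.mem_domSets.mp hS)

theorem two_pow_sub_one_mul_two_mul_sum_card_domSets_le {d : ℕ} (hd : 1 ≤ d)
    (hdδ : d ≤ G.minDegree + 1) :
    (2 ^ d - 1) * (2 * ∑ S ∈ G.domSets, #S)
      ≤ (2 ^ d - 1 + d) * (Fintype.card V * #G.domSets) := by
  have hunique : ∀ u, (2 ^ d - 1) * #{S ∈ G.domSets | #(S ∩ G.closedNeighborFinset u) = 1}
      ≤ d * #G.domSets := fun u =>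
    card_filter_card_inter_eq_one_le_of_le G.isUpperSet_domSets hd <| by
      rw [card_closedNeighborFinset]
      exact hdδ.trans (Nat.add_le_add_right (G.minDegree_le_degree u) 1)
  have hcritical : (2 ^ d - 1) * ∑ v, #{S ∈ G.domSets | v ∈ S ∧ S.erase v ∉ G.domSets}
      ≤ Fintype.card V * (d * #G.domSets) :=
    calc _ ≤ (2 ^ d - 1) * ∑ u, #{S ∈ G.domSets | #(S ∩ G.closedNeighborFinset u) = 1} :=
          Nat.mul_le_mul_left _ G.sum_card_filter_notMem_domSets_erase_le
      _ ≤ ∑ _u : V, d * #G.domSets := by rw [mul_sum]; exact sum_le_sum fun u _ => hunique u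
      _ = Fintype.card V * (d * #G.domSets) := by rw [sum_const, card_univ, smul_eq_mul]
  rw [two_mul_sum_card_eq G.isUpperSet_domSets]
  nlinarith [hcritical]

end SimpleGraph

/-- For a graph `G` on `n` vertices with minimum degree `δ ≥ 1`,
`avd(G) ≤ (n/2)·(1 + δ/(2^δ − 1))`. -/
theorem avd_le_of_minDegree_bound {V : Type*} [Fintype V] (G : SimpleGraph V)
    [DecidableRel G.Adj] (n δ : ℕ) (hn : n = Fintype.card V)
    (hδ : δ = G.minDegree) (hδ1 : 1 ≤ δ) :
    G.avd ≤ (n : ℝ) / 2 * (1 + (δ : ℝ) / (2 ^ δ - 1)) := by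
  classical
  have hcount := G.two_pow_sub_one_mul_two_mul_sum_card_domSets_le hδ1 (hδ ▸ Nat.le_succ _)
  have hpow : (0 : ℝ) < 2 ^ δ - 1 := sub_pos.mpr (one_lt_pow₀ one_lt_two (by omega))
  have hdom : (0 : ℝ) < #G.domSets := by exact_mod_cast G.domSets_nonempty.card_pos
  have hcountℝ : ((2 : ℝ) ^ δ - 1) * (2 * ∑ S ∈ G.domSets, (#S : ℝ))
      ≤ ((2 : ℝ) ^ δ - 1 + δ) * (n * #G.domSets) := by
    have := Nat.cast_le (α := ℝ) |>.mpr hcount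
    push_cast [Nat.cast_sub Nat.one_le_two_pow] at this
    rwa [hn]
  rw [SimpleGraph.avd, div_le_iff₀ hdom]
  have hrhs : (n : ℝ) / 2 * (1 + δ / (2 ^ δ - 1)) * #G.domSets
      = ((2 : ℝ) ^ δ - 1 + δ) * (n * #G.domSets) / (2 * (2 ^ δ - 1)) := by
    field_simp
  rw [hrhs, le_div_iff₀ (by positivity)]
  linarith
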